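/- arXiv:2512.19553 — 2 statements merged into one kernel-verified Lean document; each statement's English description precedes it below -/
import Mathlib

section
/- Second-order bias identity for the cross-trial estimating function with fixed, possibly misspecified nuisances: for any bounded measurable μ̄(1,·), μ̄(0,·) : 𝓛 → ℝ, measurable π̄ : 𝓛 → ℝ with ε ≤ π̄ ≤ 1−ε, and bounded measurable ξ̄ : 𝓛 → ℝ, letting Φ̄ = ∫(μ̄(1,ℓ) − μ̄(0,ℓ))dν(ℓ) + E_{P'}[ ξ̄(L_m)·( (A/π̄(L_m))·(Y − μ̄(1,L_m)) − ((1−A)/(1−π̄(L_m)))·(Y − μ̄(0,L_m)) ) ] and χ_{j,m} = ∫(μ(1,ℓ) − μ(0,ℓ))dν(ℓ), one has Φ̄ − χ_{j,m} = E_ρ[ (ξ − ξ̄·π/π̄)·(μ̄(1,·) − μ(1,·)) ] − E_ρ[ (ξ − ξ̄·(1−π)/(1−π̄))·(μ̄(0,·) − μ(0,·)) ], where E_ρ denotes integration of functions of ℓ ∈ 𝓛 against ρ. -/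
open MeasureTheory ProbabilityTheory

lemma aux_integrable_of_ae_bound {α : Type*} [MeasurableSpace α] {μ : Measure α}
    [IsFiniteMeasure μ] {f : α → ℝ} (hf : Measurable f) {Cf : ℝ}
    (h : ∀ᵐ x ∂μ, |f x| ≤ Cf) : Integrable f μ :=
  Integrable.mono' (integrable_const Cf) hf.aestronglyMeasurable
    (h.mono fun x hx => by simpa using hx)

lemma aux_abs_mul_le {a b A B : ℝ} (ha : |a| ≤ A) (hb : |b| ≤ B) : |a * b| ≤ A * B := by
  rw [abs_mul]
  exact mul_le_mul ha hb (abs_nonneg _) (le_trans (abs_nonneg _) ha)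

lemma aux_abs_div_le {x c X ε : ℝ} (hε : 0 < ε) (hx : |x| ≤ X) (hc : ε ≤ c) :
    |x / c| ≤ X / ε := by
  rw [abs_div]
  exact div_le_div₀ (le_trans (abs_nonneg _) hx) hx hε
    (by rw [abs_of_pos (lt_of_lt_of_le hε hc)]; exact hc)

lemma aux_abs_sub_le {a b A B : ℝ} (ha : |a| ≤ A) (hb : |b| ≤ B) : |a - b| ≤ A + B :=
  (abs_sub _ _).trans (add_le_add ha hb)

lemma aux_tower {Ω : Type*} [mΩ : MeasurableSpace Ω] {𝓛 : Type*} [m𝓛 : MeasurableSpace 𝓛]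
    (P' : Measure Ω) [IsProbabilityMeasure P'] {Lm : Ω → 𝓛} (hLm : Measurable Lm)
    {A : Ω → ℝ} (hA : Measurable A) {CA : ℝ} (hAb : ∀ ω, |A ω| ≤ CA)
    {π : 𝓛 → ℝ}
    (hπver : (fun ω => π (Lm ω)) =ᵐ[P'] P'[A | MeasurableSpace.comap Lm inferInstance])
    {h : 𝓛 → ℝ} (hh : Measurable h) {Ch : ℝ} (hhb : ∀ ℓ, |h ℓ| ≤ Ch) :
    ∫ ω, A ω * h (Lm ω) ∂P' = ∫ ω, π (Lm ω) * h (Lm ω) ∂P' := by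
  have hm : MeasurableSpace.comap Lm m𝓛 ≤ mΩ := hLm.comap_le
  have hLmm : Measurable[MeasurableSpace.comap Lm m𝓛] Lm := Measurable.of_comap_le le_rfl
  have hfm : StronglyMeasurable[MeasurableSpace.comap Lm m𝓛] (fun ω => h (Lm ω)) :=
    (hh.comp hLmm).stronglyMeasurable
  have hAint : Integrable A P' := aux_integrable_of_ae_bound hA (Filter.Eventually.of_forall hAb)
  have hprod : Integrable ((fun ω => h (Lm ω)) * A) P' := by
    refine aux_integrable_of_ae_bound (Cf := Ch * CA) ((hh.comp hLm).mul hA)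
      (Filter.Eventually.of_forall fun ω => ?_)
    exact aux_abs_mul_le (hhb (Lm ω)) (hAb ω)
  calc ∫ ω, A ω * h (Lm ω) ∂P' = ∫ ω, ((fun ω => h (Lm ω)) * A) ω ∂P' := by
        refine integral_congr_ae (Filter.Eventually.of_forall fun ω => ?_)
        simp [mul_comm]
    _ = ∫ ω, (P'[(fun ω => h (Lm ω)) * A | MeasurableSpace.comap Lm m𝓛]) ω ∂P' :=
        (integral_condExp hm).symm
    _ = ∫ ω, h (Lm ω) * (P'[A | MeasurableSpace.comap Lm m𝓛]) ω ∂P' := by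
        refine integral_congr_ae ?_
        filter_upwards [condExp_mul_of_stronglyMeasurable_left hfm hprod hAint] with ω hω
        simpa using hω
    _ = ∫ ω, π (Lm ω) * h (Lm ω) ∂P' := by
        refine integral_congr_ae ?_
        filter_upwards [hπver] with ω hω
        rw [← hω, mul_comm]

/-- Second-order bias identity for the cross-trial estimating function with
fixed, possibly misspecified nuisances `(μ̄, π̄, ξ̄)`:
`Φ̄ − χ_{j,m} = E_ρ[(ξ − ξ̄·π/π̄)·(μ̄(1,·) − μ(1,·))]
             − E_ρ[(ξ − ξ̄·(1−π)/(1−π̄))·(μ̄(0,·) − μ(0,·))]`. -/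
theorem cross_trial_second_order_bias_identity
    {Ω : Type*} [MeasurableSpace Ω]
    (P : Measure Ω) [IsProbabilityMeasure P]
    {𝓛 : Type*} [MeasurableSpace 𝓛] [StandardBorelSpace 𝓛]
    (Ej Em : Set Ω) (hEj : MeasurableSet Ej) (hEm : MeasurableSet Em)
    (hEjpos : 0 < P Ej) (hEmpos : 0 < P Em)
    (Lj Lm : Ω → 𝓛) (hLj : Measurable Lj) (hLm : Measurable Lm)
    -- ν is the law of L_j given E_j ; ρ is the law of L_m given E_m
    (ν ρ : Measure 𝓛) (hν : ν = (P[|Ej]).map Lj) (hρ : ρ = (P[|Em]).map Lm)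
    -- cross-trial overlap: ξ is a bounded version of dν/dρ
    (ξ : 𝓛 → ℝ) (hξ : Measurable ξ) (hξ0 : ∀ ℓ, 0 ≤ ξ ℓ)
    (Cξ : ℝ) (hξb : ∀ ℓ, ξ ℓ ≤ Cξ)
    (hξRN : ∀ B : Set 𝓛, MeasurableSet B → ν B = ∫⁻ ℓ in B, ENNReal.ofReal (ξ ℓ) ∂ρ)
    (A : Ω → ℝ) (hA : Measurable A) (hA01 : ∀ ω, A ω = 0 ∨ A ω = 1)
    (Y : Ω → ℝ) (hY : Measurable Y) (C : ℝ) (hYb : ∀ ω, |Y ω| ≤ C)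
    -- propensity score, under P' = P[|E_m]
    (ε : ℝ) (hε : ε ∈ Set.Ioo (0 : ℝ) (1 / 2))
    (π : 𝓛 → ℝ) (hπ : Measurable π)
    (hπver : (fun ω => π (Lm ω)) =ᵐ[P[|Em]]
      (P[|Em])[A | MeasurableSpace.comap Lm inferInstance])
    (hπbd : ∀ᵐ ω ∂(P[|Em]), ε ≤ π (Lm ω) ∧ π (Lm ω) ≤ 1 - ε)
    -- outcome regressions, under P' = P[|E_m]
    (μ1 μ0 : 𝓛 → ℝ) (hμ1 : Measurable μ1) (hμ0 : Measurable μ0)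
    (Cμ : ℝ) (hμ1b : ∀ ℓ, |μ1 ℓ| ≤ Cμ) (hμ0b : ∀ ℓ, |μ0 ℓ| ≤ Cμ)
    (hreg1 : ∀ g : 𝓛 → ℝ, Measurable g → (∃ Cg, ∀ ℓ, |g ℓ| ≤ Cg) →
      ∫ ω, A ω * Y ω * g (Lm ω) ∂(P[|Em])
        = ∫ ω, A ω * μ1 (Lm ω) * g (Lm ω) ∂(P[|Em]))
    (hreg0 : ∀ g : 𝓛 → ℝ, Measurable g → (∃ Cg, ∀ ℓ, |g ℓ| ≤ Cg) →
      ∫ ω, (1 - A ω) * Y ω * g (Lm ω) ∂(P[|Em])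
        = ∫ ω, (1 - A ω) * μ0 (Lm ω) * g (Lm ω) ∂(P[|Em]))
    -- fixed, possibly misspecified nuisances
    (μbar1 μbar0 : 𝓛 → ℝ) (hμbar1 : Measurable μbar1) (hμbar0 : Measurable μbar0)
    (Cbar : ℝ) (hμbar1b : ∀ ℓ, |μbar1 ℓ| ≤ Cbar) (hμbar0b : ∀ ℓ, |μbar0 ℓ| ≤ Cbar)
    (πbar : 𝓛 → ℝ) (hπbar : Measurable πbar)
    (hπbarbd : ∀ ℓ, ε ≤ πbar ℓ ∧ πbar ℓ ≤ 1 - ε)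
    (ξbar : 𝓛 → ℝ) (hξbar : Measurable ξbar)
    (Cξbar : ℝ) (hξbarb : ∀ ℓ, |ξbar ℓ| ≤ Cξbar) :
    ((∫ ℓ, (μbar1 ℓ - μbar0 ℓ) ∂ν)
      + ∫ ω, ξbar (Lm ω)
          * ((A ω / πbar (Lm ω)) * (Y ω - μbar1 (Lm ω))
            - ((1 - A ω) / (1 - πbar (Lm ω))) * (Y ω - μbar0 (Lm ω))) ∂(P[|Em]))
      - ∫ ℓ, (μ1 ℓ - μ0 ℓ) ∂ν
    = (∫ ℓ, (ξ ℓ - ξbar ℓ * π ℓ / πbar ℓ) * (μbar1 ℓ - μ1 ℓ) ∂ρ)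
      - ∫ ℓ, (ξ ℓ - ξbar ℓ * (1 - π ℓ) / (1 - πbar ℓ)) * (μbar0 ℓ - μ0 ℓ) ∂ρ := by
  obtain ⟨hε0, hε2⟩ := hε
  haveI hP'prob : IsProbabilityMeasure (P[|Em]) := cond_isProbabilityMeasure hEmpos.ne'
  haveI hρprob : IsProbabilityMeasure ρ := hρ ▸ Measure.isProbabilityMeasure_map hLm.aemeasurable
  -- basic bounds
  have hA1 : ∀ ω, |A ω| ≤ 1 := fun ω => by rcases hA01 ω with h | h <;> simp [h]
  have h1A : ∀ ω, |1 - A ω| ≤ 1 := fun ω => by rcases hA01 ω with h | h <;> simp [h]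
  have hξabs : ∀ ℓ, |ξ ℓ| ≤ Cξ := fun ℓ => by rw [abs_of_nonneg (hξ0 ℓ)]; exact hξb ℓ
  have hπρ : ∀ᵐ ℓ ∂ρ, ε ≤ π ℓ ∧ π ℓ ≤ 1 - ε := by
    rw [hρ]
    exact (ae_map_iff hLm.aemeasurable
      ((measurableSet_le measurable_const hπ).inter (measurableSet_le hπ measurable_const))).mpr
      hπbd
  -- ν = ρ.withDensity ξ
  have hνd : ν = ρ.withDensity (fun ℓ => ((ξ ℓ).toNNReal : ENNReal)) := by
    ext B hB
    rw [hξRN B hB, withDensity_apply _ hB]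
    rfl
  have int_nu : ∀ f : 𝓛 → ℝ, Measurable f → ∫ ℓ, f ℓ ∂ν = ∫ ℓ, ξ ℓ * f ℓ ∂ρ := by
    intro f hf
    rw [hνd, integral_withDensity_eq_integral_smul hξ.real_toNNReal f]
    refine integral_congr_ae (Filter.Eventually.of_forall fun ℓ => ?_)
    simp [NNReal.smul_def, Real.coe_toNNReal _ (hξ0 ℓ)]
  have map_int : ∀ f : 𝓛 → ℝ, Measurable f → ∫ ω, f (Lm ω) ∂(P[|Em]) = ∫ ℓ, f ℓ ∂ρ := by
    intro f hf
    rw [hρ, integral_map hLm.aemeasurable hf.aestronglyMeasurable]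
  -- misspecified weights
  set g1 : 𝓛 → ℝ := fun ℓ => ξbar ℓ / πbar ℓ with hg1def
  set g0 : 𝓛 → ℝ := fun ℓ => ξbar ℓ / (1 - πbar ℓ) with hg0def
  have hg1m : Measurable g1 := hξbar.div hπbar
  have hg0m : Measurable g0 := hξbar.div (measurable_const.sub hπbar)
  have hg1b : ∀ ℓ, |g1 ℓ| ≤ Cξbar / ε := fun ℓ =>
    aux_abs_div_le hε0 (hξbarb ℓ) (hπbarbd ℓ).1
  have hg0b : ∀ ℓ, |g0 ℓ| ≤ Cξbar / ε := fun ℓ =>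
    aux_abs_div_le hε0 (hξbarb ℓ) (by linarith [(hπbarbd ℓ).2])
  set h1 : 𝓛 → ℝ := fun ℓ => (μ1 ℓ - μbar1 ℓ) * g1 ℓ with hh1def
  set h0 : 𝓛 → ℝ := fun ℓ => (μ0 ℓ - μbar0 ℓ) * g0 ℓ with hh0def
  have hh1m : Measurable h1 := (hμ1.sub hμbar1).mul hg1m
  have hh0m : Measurable h0 := (hμ0.sub hμbar0).mul hg0m
  have hh1b : ∀ ℓ, |h1 ℓ| ≤ (Cμ + Cbar) * (Cξbar / ε) := fun ℓ =>
    aux_abs_mul_le (aux_abs_sub_le (hμ1b ℓ) (hμbar1b ℓ)) (hg1b ℓ)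
  have hh0b : ∀ ℓ, |h0 ℓ| ≤ (Cμ + Cbar) * (Cξbar / ε) := fun ℓ =>
    aux_abs_mul_le (aux_abs_sub_le (hμ0b ℓ) (hμbar0b ℓ)) (hg0b ℓ)
  -- integrability over ρ
  have iT1 : Integrable (fun ℓ => ξ ℓ * (μbar1 ℓ - μ1 ℓ)) ρ :=
    aux_integrable_of_ae_bound (hξ.mul (hμbar1.sub hμ1))
      (Filter.Eventually.of_forall fun ℓ =>
        aux_abs_mul_le (hξabs ℓ) (aux_abs_sub_le (hμbar1b ℓ) (hμ1b ℓ)))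
  have iT0 : Integrable (fun ℓ => ξ ℓ * (μbar0 ℓ - μ0 ℓ)) ρ :=
    aux_integrable_of_ae_bound (hξ.mul (hμbar0.sub hμ0))
      (Filter.Eventually.of_forall fun ℓ =>
        aux_abs_mul_le (hξabs ℓ) (aux_abs_sub_le (hμbar0b ℓ) (hμ0b ℓ)))
  have iAb : Integrable (fun ℓ => ξ ℓ * (μbar1 ℓ - μbar0 ℓ)) ρ :=
    aux_integrable_of_ae_bound (hξ.mul (hμbar1.sub hμbar0))
      (Filter.Eventually.of_forall fun ℓ =>
        aux_abs_mul_le (hξabs ℓ) (aux_abs_sub_le (hμbar1b ℓ) (hμbar0b ℓ)))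
  have iBt : Integrable (fun ℓ => ξ ℓ * (μ1 ℓ - μ0 ℓ)) ρ :=
    aux_integrable_of_ae_bound (hξ.mul (hμ1.sub hμ0))
      (Filter.Eventually.of_forall fun ℓ =>
        aux_abs_mul_le (hξabs ℓ) (aux_abs_sub_le (hμ1b ℓ) (hμ0b ℓ)))
  have iK1 : Integrable (fun ℓ => (ξbar ℓ * π ℓ / πbar ℓ) * (μbar1 ℓ - μ1 ℓ)) ρ := by
    refine aux_integrable_of_ae_bound (Cf := Cξbar * 1 / ε * (Cbar + Cμ))
      (((hξbar.mul hπ).div hπbar).mul (hμbar1.sub hμ1)) ?_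
    filter_upwards [hπρ] with ℓ hℓ
    have hπ1 : |π ℓ| ≤ 1 := abs_le.mpr ⟨by linarith, by linarith⟩
    exact aux_abs_mul_le
      (aux_abs_div_le hε0 (aux_abs_mul_le (hξbarb ℓ) hπ1) (hπbarbd ℓ).1)
      (aux_abs_sub_le (hμbar1b ℓ) (hμ1b ℓ))
  have iK0 : Integrable (fun ℓ => (ξbar ℓ * (1 - π ℓ) / (1 - πbar ℓ)) * (μbar0 ℓ - μ0 ℓ)) ρ := by
    refine aux_integrable_of_ae_bound (Cf := Cξbar * 1 / ε * (Cbar + Cμ))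
      (((hξbar.mul (measurable_const.sub hπ)).div (measurable_const.sub hπbar)).mul
        (hμbar0.sub hμ0)) ?_
    filter_upwards [hπρ] with ℓ hℓ
    have hπ1 : |1 - π ℓ| ≤ 1 := abs_le.mpr ⟨by linarith, by linarith⟩
    exact aux_abs_mul_le
      (aux_abs_div_le hε0 (aux_abs_mul_le (hξbarb ℓ) hπ1) (by linarith [(hπbarbd ℓ).2]))
      (aux_abs_sub_le (hμbar0b ℓ) (hμ0b ℓ))
  have ih0ρ : Integrable h0 ρ :=
    aux_integrable_of_ae_bound hh0m (Filter.Eventually.of_forall hh0b)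
  have iπh0 : Integrable (fun ℓ => π ℓ * h0 ℓ) ρ := by
    refine aux_integrable_of_ae_bound (Cf := 1 * ((Cμ + Cbar) * (Cξbar / ε))) (hπ.mul hh0m) ?_
    filter_upwards [hπρ] with ℓ hℓ
    exact aux_abs_mul_le (abs_le.mpr ⟨by linarith, by linarith⟩) (hh0b ℓ)
  -- integrability over P'
  have intP : ∀ (f : Ω → ℝ), Measurable f → ∀ (Cf : ℝ), (∀ ω, |f ω| ≤ Cf) →
      Integrable f (P[|Em]) := fun f hf Cf h =>
    aux_integrable_of_ae_bound hf (Filter.Eventually.of_forall h)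
  have it1 : Integrable (fun ω => A ω * Y ω * g1 (Lm ω)) (P[|Em]) :=
    intP _ ((hA.mul hY).mul (hg1m.comp hLm)) (1 * C * (Cξbar / ε))
      (fun ω => aux_abs_mul_le (aux_abs_mul_le (hA1 ω) (hYb ω)) (hg1b (Lm ω)))
  have it2 : Integrable (fun ω => A ω * μbar1 (Lm ω) * g1 (Lm ω)) (P[|Em]) :=
    intP _ ((hA.mul (hμbar1.comp hLm)).mul (hg1m.comp hLm)) (1 * Cbar * (Cξbar / ε))
      (fun ω => aux_abs_mul_le (aux_abs_mul_le (hA1 ω) (hμbar1b (Lm ω))) (hg1b (Lm ω)))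
  have it3 : Integrable (fun ω => (1 - A ω) * Y ω * g0 (Lm ω)) (P[|Em]) :=
    intP _ (((measurable_const.sub hA).mul hY).mul (hg0m.comp hLm)) (1 * C * (Cξbar / ε))
      (fun ω => aux_abs_mul_le (aux_abs_mul_le (h1A ω) (hYb ω)) (hg0b (Lm ω)))
  have it4 : Integrable (fun ω => (1 - A ω) * μbar0 (Lm ω) * g0 (Lm ω)) (P[|Em]) :=
    intP _ (((measurable_const.sub hA).mul (hμbar0.comp hLm)).mul (hg0m.comp hLm))
      (1 * Cbar * (Cξbar / ε))
      (fun ω => aux_abs_mul_le (aux_abs_mul_le (h1A ω) (hμbar0b (Lm ω))) (hg0b (Lm ω)))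
  have iP1 : Integrable (fun ω => A ω * μ1 (Lm ω) * g1 (Lm ω)) (P[|Em]) :=
    intP _ ((hA.mul (hμ1.comp hLm)).mul (hg1m.comp hLm)) (1 * Cμ * (Cξbar / ε))
      (fun ω => aux_abs_mul_le (aux_abs_mul_le (hA1 ω) (hμ1b (Lm ω))) (hg1b (Lm ω)))
  have iP3 : Integrable (fun ω => (1 - A ω) * μ0 (Lm ω) * g0 (Lm ω)) (P[|Em]) :=
    intP _ (((measurable_const.sub hA).mul (hμ0.comp hLm)).mul (hg0m.comp hLm))
      (1 * Cμ * (Cξbar / ε))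
      (fun ω => aux_abs_mul_le (aux_abs_mul_le (h1A ω) (hμ0b (Lm ω))) (hg0b (Lm ω)))
  have ih0L : Integrable (fun ω => h0 (Lm ω)) (P[|Em]) :=
    intP _ (hh0m.comp hLm) ((Cμ + Cbar) * (Cξbar / ε)) (fun ω => hh0b (Lm ω))
  have iAh0 : Integrable (fun ω => A ω * h0 (Lm ω)) (P[|Em]) :=
    intP _ (hA.mul (hh0m.comp hLm)) (1 * ((Cμ + Cbar) * (Cξbar / ε)))
      (fun ω => aux_abs_mul_le (hA1 ω) (hh0b (Lm ω)))
  -- ν-part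
  have e1 : ∫ ℓ, (μbar1 ℓ - μbar0 ℓ) ∂ν = ∫ ℓ, ξ ℓ * (μbar1 ℓ - μbar0 ℓ) ∂ρ :=
    int_nu _ (hμbar1.sub hμbar0)
  have e2 : ∫ ℓ, (μ1 ℓ - μ0 ℓ) ∂ν = ∫ ℓ, ξ ℓ * (μ1 ℓ - μ0 ℓ) ∂ρ :=
    int_nu _ (hμ1.sub hμ0)
  have e3 : ∫ ℓ, ξ ℓ * (μbar1 ℓ - μbar0 ℓ) ∂ρ - ∫ ℓ, ξ ℓ * (μ1 ℓ - μ0 ℓ) ∂ρ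
      = ∫ ℓ, ξ ℓ * (μbar1 ℓ - μ1 ℓ) ∂ρ - ∫ ℓ, ξ ℓ * (μbar0 ℓ - μ0 ℓ) ∂ρ := by
    rw [← integral_sub iAb iBt, ← integral_sub iT1 iT0]
    exact integral_congr_ae (Filter.Eventually.of_forall fun ℓ => by ring)
  -- RHS decompositions
  have f3 : ∫ ℓ, (ξ ℓ - ξbar ℓ * π ℓ / πbar ℓ) * (μbar1 ℓ - μ1 ℓ) ∂ρ
      = ∫ ℓ, ξ ℓ * (μbar1 ℓ - μ1 ℓ) ∂ρ
        - ∫ ℓ, (ξbar ℓ * π ℓ / πbar ℓ) * (μbar1 ℓ - μ1 ℓ) ∂ρ := by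
    rw [← integral_sub iT1 iK1]
    exact integral_congr_ae (Filter.Eventually.of_forall fun ℓ => by ring)
  have f4 : ∫ ℓ, (ξ ℓ - ξbar ℓ * (1 - π ℓ) / (1 - πbar ℓ)) * (μbar0 ℓ - μ0 ℓ) ∂ρ
      = ∫ ℓ, ξ ℓ * (μbar0 ℓ - μ0 ℓ) ∂ρ
        - ∫ ℓ, (ξbar ℓ * (1 - π ℓ) / (1 - πbar ℓ)) * (μbar0 ℓ - μ0 ℓ) ∂ρ := by
    rw [← integral_sub iT0 iK0]
    exact integral_congr_ae (Filter.Eventually.of_forall fun ℓ => by ring)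
  -- P'-part : split the estimating-function integrand into four pieces
  have hW : ∫ ω, ξbar (Lm ω)
          * ((A ω / πbar (Lm ω)) * (Y ω - μbar1 (Lm ω))
            - ((1 - A ω) / (1 - πbar (Lm ω))) * (Y ω - μbar0 (Lm ω))) ∂(P[|Em])
      = ((∫ ω, A ω * Y ω * g1 (Lm ω) ∂(P[|Em])
            - ∫ ω, A ω * μbar1 (Lm ω) * g1 (Lm ω) ∂(P[|Em]))
        - (∫ ω, (1 - A ω) * Y ω * g0 (Lm ω) ∂(P[|Em])
            - ∫ ω, (1 - A ω) * μbar0 (Lm ω) * g0 (Lm ω) ∂(P[|Em]))) := by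
    have i12 : Integrable
        (fun ω => A ω * Y ω * g1 (Lm ω) - A ω * μbar1 (Lm ω) * g1 (Lm ω)) (P[|Em]) :=
      it1.sub it2
    have i34 : Integrable
        (fun ω => (1 - A ω) * Y ω * g0 (Lm ω) - (1 - A ω) * μbar0 (Lm ω) * g0 (Lm ω)) (P[|Em]) :=
      it3.sub it4
    rw [← integral_sub it1 it2, ← integral_sub it3 it4, ← integral_sub i12 i34]
    refine integral_congr_ae (Filter.Eventually.of_forall fun ω => ?_)
    simp only [hg1def, hg0def]
    ring
  have hr1 : ∫ ω, A ω * Y ω * g1 (Lm ω) ∂(P[|Em])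
      = ∫ ω, A ω * μ1 (Lm ω) * g1 (Lm ω) ∂(P[|Em]) :=
    hreg1 g1 hg1m ⟨Cξbar / ε, hg1b⟩
  have hr0 : ∫ ω, (1 - A ω) * Y ω * g0 (Lm ω) ∂(P[|Em])
      = ∫ ω, (1 - A ω) * μ0 (Lm ω) * g0 (Lm ω) ∂(P[|Em]) :=
    hreg0 g0 hg0m ⟨Cξbar / ε, hg0b⟩
  -- arm 1
  have harm1 : ∫ ω, A ω * μ1 (Lm ω) * g1 (Lm ω) ∂(P[|Em])
      - ∫ ω, A ω * μbar1 (Lm ω) * g1 (Lm ω) ∂(P[|Em])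
      = ∫ ω, A ω * h1 (Lm ω) ∂(P[|Em]) := by
    rw [← integral_sub iP1 it2]
    refine integral_congr_ae (Filter.Eventually.of_forall fun ω => ?_)
    simp only [hh1def]
    ring
  have htow1 : ∫ ω, A ω * h1 (Lm ω) ∂(P[|Em]) = ∫ ω, π (Lm ω) * h1 (Lm ω) ∂(P[|Em]) :=
    aux_tower (P[|Em]) hLm hA hA1 hπver hh1m hh1b
  have hmap1 : ∫ ω, π (Lm ω) * h1 (Lm ω) ∂(P[|Em]) = ∫ ℓ, π ℓ * h1 ℓ ∂ρ :=
    map_int (fun ℓ => π ℓ * h1 ℓ) (hπ.mul hh1m)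
  have hK1' : ∫ ℓ, π ℓ * h1 ℓ ∂ρ
      = -∫ ℓ, (ξbar ℓ * π ℓ / πbar ℓ) * (μbar1 ℓ - μ1 ℓ) ∂ρ := by
    rw [← integral_neg]
    refine integral_congr_ae (Filter.Eventually.of_forall fun ℓ => ?_)
    simp only [hh1def, hg1def]
    ring
  -- arm 0
  have harm0 : ∫ ω, (1 - A ω) * μ0 (Lm ω) * g0 (Lm ω) ∂(P[|Em])
      - ∫ ω, (1 - A ω) * μbar0 (Lm ω) * g0 (Lm ω) ∂(P[|Em])
      = ∫ ω, (1 - A ω) * h0 (Lm ω) ∂(P[|Em]) := by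
    rw [← integral_sub iP3 it4]
    refine integral_congr_ae (Filter.Eventually.of_forall fun ω => ?_)
    simp only [hh0def]
    ring
  have hsplit0 : ∫ ω, (1 - A ω) * h0 (Lm ω) ∂(P[|Em])
      = ∫ ω, h0 (Lm ω) ∂(P[|Em]) - ∫ ω, A ω * h0 (Lm ω) ∂(P[|Em]) := by
    rw [← integral_sub ih0L iAh0]
    refine integral_congr_ae (Filter.Eventually.of_forall fun ω => ?_)
    ring
  have htow0 : ∫ ω, A ω * h0 (Lm ω) ∂(P[|Em]) = ∫ ω, π (Lm ω) * h0 (Lm ω) ∂(P[|Em]) :=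
    aux_tower (P[|Em]) hLm hA hA1 hπver hh0m hh0b
  have hmap0 : ∫ ω, π (Lm ω) * h0 (Lm ω) ∂(P[|Em]) = ∫ ℓ, π ℓ * h0 ℓ ∂ρ :=
    map_int (fun ℓ => π ℓ * h0 ℓ) (hπ.mul hh0m)
  have hmaph0 : ∫ ω, h0 (Lm ω) ∂(P[|Em]) = ∫ ℓ, h0 ℓ ∂ρ := map_int h0 hh0m
  have hK0' : ∫ ℓ, h0 ℓ ∂ρ - ∫ ℓ, π ℓ * h0 ℓ ∂ρ
      = -∫ ℓ, (ξbar ℓ * (1 - π ℓ) / (1 - πbar ℓ)) * (μbar0 ℓ - μ0 ℓ) ∂ρ := by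
    rw [← integral_sub ih0ρ iπh0, ← integral_neg]
    refine integral_congr_ae (Filter.Eventually.of_forall fun ℓ => ?_)
    simp only [hh0def, hg0def]
    ring
  -- assemble
  rw [e1, e2, f3, f4, hW, hr1, hr0, harm1, harm0, htow1, hmap1, hsplit0, htow0, hmap0, hmaph0]
  linarith [e3, hK1', hK0']
end

section
/- Bias bound underlying the remainder term R̂_{j,m} of Theorem 4: in the cross-trial setup with fixed misspecified nuisances (μ̄, π̄, ξ̄) satisfying in addition |ξ̄(ℓ)| ≤ ε⁻¹ for all ℓ, the bias of the cross-trial estimating function satisfies |Φ̄ − χ_{j,m}| ≤ Σ_{a∈{0,1}} ‖μ̄(a,·) − μ(a,·)‖_{L²(ρ)} · ( ‖ξ̄ − ξ‖_{L²(ρ)} + ε⁻² · ‖π̄ − π‖_{L²(ρ)} ), where Φ̄ = ∫(μ̄(1,ℓ) − μ̄(0,ℓ))dν(ℓ) + E_{P'}[ ξ̄(L_m)·( (A/π̄(L_m))·(Y − μ̄(1,L_m)) − ((1−A)/(1−π̄(L_m)))·(Y − μ̄(0,L_m)) ) ] and χ_{j,m} = ∫(μ(1,ℓ) − μ(0,ℓ))dν(ℓ).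 -/
open MeasureTheory ProbabilityTheory
open scoped ENNReal NNReal

private lemma int_of_bdd {α : Type*} [MeasurableSpace α] {μ : Measure α} [IsFiniteMeasure μ]
    {f : α → ℝ} (hf : AEStronglyMeasurable f μ) {C : ℝ} (h : ∀ᵐ x ∂μ, |f x| ≤ C) :
    Integrable f μ :=
  (memLp_top_of_bound hf C (by simpa [Real.norm_eq_abs] using h)).integrable le_top

private lemma abs_mul3_le {a b c A B C : ℝ} (ha : |a| ≤ A) (hb : |b| ≤ B) (hc : |c| ≤ C) :
    |a * b * c| ≤ A * B * C := by
  have h0a := (abs_nonneg a).trans ha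
  have h0b := (abs_nonneg b).trans hb
  calc |a * b * c| = |a| * |b| * |c| := by rw [abs_mul, abs_mul]
    _ ≤ A * B * C :=
      mul_le_mul (mul_le_mul ha hb (abs_nonneg b) h0a) hc (abs_nonneg c) (mul_nonneg h0a h0b)

private lemma cs_helper {α : Type*} [MeasurableSpace α] {μ : Measure α} [IsFiniteMeasure μ]
    {f g : α → ℝ} (hf : AEStronglyMeasurable f μ) (hg : AEStronglyMeasurable g μ)
    {Cf Cg : ℝ} (hfb : ∀ᵐ x ∂μ, |f x| ≤ Cf) (hgb : ∀ᵐ x ∂μ, |g x| ≤ Cg) :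
    ∫ x, |f x| * |g x| ∂μ ≤ Real.sqrt (∫ x, f x ^ 2 ∂μ) * Real.sqrt (∫ x, g x ^ 2 ∂μ) := by
  have h2 : (2 : ℝ).HolderConjugate 2 := Real.holderConjugate_iff.mpr ⟨one_lt_two, by norm_num⟩
  have hf2 : MemLp f (ENNReal.ofReal 2) μ :=
    MemLp.of_bound hf Cf (by simpa [Real.norm_eq_abs] using hfb)
  have hg2 : MemLp g (ENNReal.ofReal 2) μ :=
    MemLp.of_bound hg Cg (by simpa [Real.norm_eq_abs] using hgb)
  have habs : ∀ (h : α → ℝ), (fun x => ‖h x‖ ^ (2:ℝ)) = fun x => h x ^ 2 := by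
    intro h; funext x
    rw [show (2:ℝ) = ((2:ℕ):ℝ) by norm_num, Real.rpow_natCast]
    simp [Real.norm_eq_abs, sq_abs]
  calc ∫ x, |f x| * |g x| ∂μ = ∫ x, ‖f x‖ * ‖g x‖ ∂μ := by simp [Real.norm_eq_abs]
    _ ≤ (∫ x, ‖f x‖ ^ (2:ℝ) ∂μ) ^ (1/2:ℝ) * (∫ x, ‖g x‖ ^ (2:ℝ) ∂μ) ^ (1/2:ℝ) :=
        integral_mul_le_Lp_mul_Lq_of_nonneg h2 (Filter.Eventually.of_forall fun x => norm_nonneg _)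
          (Filter.Eventually.of_forall fun x => norm_nonneg _) hf2.norm hg2.norm
    _ = Real.sqrt (∫ x, f x ^ 2 ∂μ) * Real.sqrt (∫ x, g x ^ 2 ∂μ) := by
        rw [habs f, habs g, Real.sqrt_eq_rpow, Real.sqrt_eq_rpow]

private lemma integral_nu {𝓛 : Type*} [MeasurableSpace 𝓛] (ν ρ : Measure 𝓛) (ξ : 𝓛 → ℝ)
    (hξ : Measurable ξ) (hξ0 : ∀ ℓ, 0 ≤ ξ ℓ)
    (hRN : ∀ B : Set 𝓛, MeasurableSet B → ν B = ∫⁻ ℓ in B, ENNReal.ofReal (ξ ℓ) ∂ρ)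
    (f : 𝓛 → ℝ) :
    ∫ ℓ, f ℓ ∂ν = ∫ ℓ, ξ ℓ * f ℓ ∂ρ := by
  have hν : ν = ρ.withDensity (fun ℓ => ((ξ ℓ).toNNReal : ℝ≥0∞)) := by
    ext B hB
    rw [hRN B hB, withDensity_apply _ hB]
    exact lintegral_congr fun _ => rfl
  rw [hν, integral_withDensity_eq_integral_smul (f := fun ℓ => (ξ ℓ).toNNReal)
    (measurable_real_toNNReal.comp hξ) f]
  congr 1
  funext ℓ
  simp [NNReal.smul_def, Real.coe_toNNReal _ (hξ0 ℓ)]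

private lemma integral_A_mul {Ω 𝓛 : Type*} [mΩ : MeasurableSpace Ω] [m𝓛 : MeasurableSpace 𝓛]
    (P' : Measure Ω) [IsProbabilityMeasure P'] (Lm : Ω → 𝓛) (hLm : Measurable Lm)
    (A : Ω → ℝ) (hA : Measurable A) (hA1 : ∀ ω, |A ω| ≤ 1)
    (π : 𝓛 → ℝ)
    (hπver : (fun ω => π (Lm ω)) =ᵐ[P'] P'[A | MeasurableSpace.comap Lm inferInstance])
    (h : 𝓛 → ℝ) (hh : Measurable h) (Ch : ℝ) (hhb : ∀ ℓ, |h ℓ| ≤ Ch) :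
    ∫ ω, A ω * h (Lm ω) ∂P' = ∫ ω, π (Lm ω) * h (Lm ω) ∂P' := by
  have hm : MeasurableSpace.comap Lm m𝓛 ≤ mΩ := hLm.comap_le
  have hAint : Integrable A P' := int_of_bdd hA.aestronglyMeasurable (.of_forall hA1)
  have hLm_m : Measurable[MeasurableSpace.comap Lm m𝓛] Lm := fun s hs => ⟨s, hs, rfl⟩
  have hhsm : StronglyMeasurable[MeasurableSpace.comap Lm m𝓛] (fun ω => h (Lm ω)) := (hh.comp hLm_m).stronglyMeasurable
  have hpull := condExp_stronglyMeasurable_mul_of_bound hm hhsm hAint Ch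
    (Filter.Eventually.of_forall fun ω => by simpa [Real.norm_eq_abs] using hhb (Lm ω))
  calc ∫ ω, A ω * h (Lm ω) ∂P' = ∫ ω, ((fun ω => h (Lm ω)) * A) ω ∂P' := by
        simp [mul_comm]
    _ = ∫ ω, (P'[(fun ω => h (Lm ω)) * A|MeasurableSpace.comap Lm m𝓛]) ω ∂P' := (integral_condExp hm).symm
    _ = ∫ ω, h (Lm ω) * (P'[A|MeasurableSpace.comap Lm m𝓛]) ω ∂P' := integral_congr_ae hpull
    _ = ∫ ω, π (Lm ω) * h (Lm ω) ∂P' := integral_congr_ae <| by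
        filter_upwards [hπver] with ω hω
        rw [← hω, mul_comm]

/-- Bias bound underlying the remainder term `R̂_{j,m}` of Theorem 4: with
fixed misspecified nuisances `(μ̄, π̄, ξ̄)`, `|ξ̄| ≤ ε⁻¹`,
`|Φ̄ − χ_{j,m}| ≤ Σ_{a∈{0,1}} ‖μ̄(a,·) − μ(a,·)‖_{L²(ρ)}
  · (‖ξ̄ − ξ‖_{L²(ρ)} + ε⁻²·‖π̄ − π‖_{L²(ρ)})`. -/
theorem cross_trial_bias_bound
    {Ω : Type*} [MeasurableSpace Ω]
    (P : Measure Ω) [IsProbabilityMeasure P]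
    {𝓛 : Type*} [MeasurableSpace 𝓛] [StandardBorelSpace 𝓛]
    (Ej Em : Set Ω) (hEj : MeasurableSet Ej) (hEm : MeasurableSet Em)
    (hEjpos : 0 < P Ej) (hEmpos : 0 < P Em)
    (Lj Lm : Ω → 𝓛) (hLj : Measurable Lj) (hLm : Measurable Lm)
    -- ν is the law of L_j given E_j ; ρ is the law of L_m given E_m
    (ν ρ : Measure 𝓛) (hν : ν = (P[|Ej]).map Lj) (hρ : ρ = (P[|Em]).map Lm)
    -- cross-trial overlap: ξ is a bounded version of dν/dρ
    (ξ : 𝓛 → ℝ) (hξ : Measurable ξ) (hξ0 : ∀ ℓ, 0 ≤ ξ ℓ)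
    (Cξ : ℝ) (hξb : ∀ ℓ, ξ ℓ ≤ Cξ)
    (hξRN : ∀ B : Set 𝓛, MeasurableSet B → ν B = ∫⁻ ℓ in B, ENNReal.ofReal (ξ ℓ) ∂ρ)
    (A : Ω → ℝ) (hA : Measurable A) (hA01 : ∀ ω, A ω = 0 ∨ A ω = 1)
    (Y : Ω → ℝ) (hY : Measurable Y) (C : ℝ) (hYb : ∀ ω, |Y ω| ≤ C)
    -- propensity score, under P' = P[|E_m]
    (ε : ℝ) (hε : ε ∈ Set.Ioo (0 : ℝ) (1 / 2))
    (π : 𝓛 → ℝ) (hπ : Measurable π)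
    (hπver : (fun ω => π (Lm ω)) =ᵐ[P[|Em]]
      (P[|Em])[A | MeasurableSpace.comap Lm inferInstance])
    (hπbd : ∀ᵐ ω ∂(P[|Em]), ε ≤ π (Lm ω) ∧ π (Lm ω) ≤ 1 - ε)
    -- outcome regressions, under P' = P[|E_m]
    (μ1 μ0 : 𝓛 → ℝ) (hμ1 : Measurable μ1) (hμ0 : Measurable μ0)
    (Cμ : ℝ) (hμ1b : ∀ ℓ, |μ1 ℓ| ≤ Cμ) (hμ0b : ∀ ℓ, |μ0 ℓ| ≤ Cμ)
    (hreg1 : ∀ g : 𝓛 → ℝ, Measurable g → (∃ Cg, ∀ ℓ, |g ℓ| ≤ Cg) →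
      ∫ ω, A ω * Y ω * g (Lm ω) ∂(P[|Em])
        = ∫ ω, A ω * μ1 (Lm ω) * g (Lm ω) ∂(P[|Em]))
    (hreg0 : ∀ g : 𝓛 → ℝ, Measurable g → (∃ Cg, ∀ ℓ, |g ℓ| ≤ Cg) →
      ∫ ω, (1 - A ω) * Y ω * g (Lm ω) ∂(P[|Em])
        = ∫ ω, (1 - A ω) * μ0 (Lm ω) * g (Lm ω) ∂(P[|Em]))
    -- fixed, possibly misspecified nuisances
    (μbar1 μbar0 : 𝓛 → ℝ) (hμbar1 : Measurable μbar1) (hμbar0 : Measurable μbar0)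
    (Cbar : ℝ) (hμbar1b : ∀ ℓ, |μbar1 ℓ| ≤ Cbar) (hμbar0b : ∀ ℓ, |μbar0 ℓ| ≤ Cbar)
    (πbar : 𝓛 → ℝ) (hπbar : Measurable πbar)
    (hπbarbd : ∀ ℓ, ε ≤ πbar ℓ ∧ πbar ℓ ≤ 1 - ε)
    (ξbar : 𝓛 → ℝ) (hξbar : Measurable ξbar) (hξbarb : ∀ ℓ, |ξbar ℓ| ≤ ε⁻¹) :
    |((∫ ℓ, (μbar1 ℓ - μbar0 ℓ) ∂ν)
        + ∫ ω, ξbar (Lm ω)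
            * ((A ω / πbar (Lm ω)) * (Y ω - μbar1 (Lm ω))
              - ((1 - A ω) / (1 - πbar (Lm ω))) * (Y ω - μbar0 (Lm ω))) ∂(P[|Em]))
      - ∫ ℓ, (μ1 ℓ - μ0 ℓ) ∂ν|
    ≤ (Real.sqrt (∫ ℓ, (μbar1 ℓ - μ1 ℓ) ^ 2 ∂ρ)
          + Real.sqrt (∫ ℓ, (μbar0 ℓ - μ0 ℓ) ^ 2 ∂ρ))
        * (Real.sqrt (∫ ℓ, (ξbar ℓ - ξ ℓ) ^ 2 ∂ρ)
          + ε⁻¹ ^ 2 * Real.sqrt (∫ ℓ, (πbar ℓ - π ℓ) ^ 2 ∂ρ)) := by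
  obtain ⟨hε0, hε12⟩ := hε
  haveI hPm : IsProbabilityMeasure (P[|Em]) := cond_isProbabilityMeasure hEmpos.ne'
  haveI hPj : IsProbabilityMeasure (P[|Ej]) := cond_isProbabilityMeasure hEjpos.ne'
  haveI hρprob : IsProbabilityMeasure ρ := by
    rw [hρ]; exact Measure.isProbabilityMeasure_map hLm.aemeasurable
  haveI hνprob : IsProbabilityMeasure ν := by
    rw [hν]; exact Measure.isProbabilityMeasure_map hLj.aemeasurable
  obtain ⟨ℓ0, -⟩ : (Set.univ : Set 𝓛).Nonempty :=
    nonempty_of_measure_ne_zero (by simp : ρ Set.univ ≠ 0)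
  have hC0 : 0 ≤ C := by
    obtain ⟨ω0, -⟩ := nonempty_of_measure_ne_zero hEmpos.ne'
    exact (abs_nonneg _).trans (hYb ω0)
  have hCμ0 : 0 ≤ Cμ := (abs_nonneg _).trans (hμ1b ℓ0)
  have hCbar0 : 0 ≤ Cbar := (abs_nonneg _).trans (hμbar1b ℓ0)
  have hCξ0 : 0 ≤ Cξ := (hξ0 ℓ0).trans (hξb ℓ0)
  have hεinv0 : (0:ℝ) < ε⁻¹ := inv_pos.mpr hε0
  have hA1 : ∀ ω, |A ω| ≤ 1 := fun ω => by rcases hA01 ω with h | h <;> simp [h]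
  have h1A1 : ∀ ω, |1 - A ω| ≤ 1 := fun ω => by rcases hA01 ω with h | h <;> simp [h]
  have hπbar_pos : ∀ ℓ, 0 < πbar ℓ := fun ℓ => lt_of_lt_of_le hε0 (hπbarbd ℓ).1
  have h1πbar_pos : ∀ ℓ, 0 < 1 - πbar ℓ := fun ℓ => by
    have := (hπbarbd ℓ).2; have := hε0; linarith
  have hεπbar : ∀ ℓ, ε ≤ 1 - πbar ℓ := fun ℓ => by have := (hπbarbd ℓ).2; linarith
  -- bounds for the two ratios
  have hq1b : ∀ ℓ, |ξbar ℓ / πbar ℓ| ≤ ε⁻¹ * ε⁻¹ := fun ℓ => by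
    rw [abs_div, abs_of_pos (hπbar_pos ℓ), div_le_iff₀ (hπbar_pos ℓ)]
    calc |ξbar ℓ| ≤ ε⁻¹ := hξbarb ℓ
      _ = ε⁻¹ * ε⁻¹ * ε := by field_simp
      _ ≤ ε⁻¹ * ε⁻¹ * πbar ℓ := by
          have := (hπbarbd ℓ).1
          nlinarith [mul_pos hεinv0 hεinv0]
  have hq0b : ∀ ℓ, |ξbar ℓ / (1 - πbar ℓ)| ≤ ε⁻¹ * ε⁻¹ := fun ℓ => by
    rw [abs_div, abs_of_pos (h1πbar_pos ℓ), div_le_iff₀ (h1πbar_pos ℓ)]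
    calc |ξbar ℓ| ≤ ε⁻¹ := hξbarb ℓ
      _ = ε⁻¹ * ε⁻¹ * ε := by field_simp
      _ ≤ ε⁻¹ * ε⁻¹ * (1 - πbar ℓ) := by
          have := hεπbar ℓ
          nlinarith [mul_pos hεinv0 hεinv0]
  have hq1m : Measurable fun ℓ => ξbar ℓ / πbar ℓ := hξbar.div hπbar
  have hq0m : Measurable fun ℓ => ξbar ℓ / (1 - πbar ℓ) :=
    hξbar.div (measurable_const.sub hπbar)
  -- a.e. bounds on π under ρ
  have hπρ : ∀ᵐ ℓ ∂ρ, ε ≤ π ℓ ∧ π ℓ ≤ 1 - ε := by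
    rw [hρ]
    exact (ae_map_iff hLm.aemeasurable
      ((measurableSet_le measurable_const hπ).inter
        (measurableSet_le hπ measurable_const))).mpr hπbd
  have hπρ1 : ∀ᵐ ℓ ∂ρ, |π ℓ| ≤ 1 := by
    filter_upwards [hπρ] with ℓ h
    rw [abs_le]; constructor <;> [linarith [h.1, hε0]; linarith [h.2, hε0]]
  have hπδb : ∀ᵐ ℓ ∂ρ, |πbar ℓ - π ℓ| ≤ 2 := by
    filter_upwards [hπρ1] with ℓ h
    calc |πbar ℓ - π ℓ| ≤ |πbar ℓ| + |π ℓ| := abs_sub _ _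
      _ ≤ 1 + 1 := by
          refine add_le_add ?_ h
          rw [abs_le]; exact ⟨by linarith [(hπbarbd ℓ).1, hε0], by linarith [(hπbarbd ℓ).2, hε0]⟩
      _ = 2 := by norm_num
  -- difference bounds
  have hD1b : ∀ ℓ, |μbar1 ℓ - μ1 ℓ| ≤ Cbar + Cμ := fun ℓ =>
    (abs_sub _ _).trans (add_le_add (hμbar1b ℓ) (hμ1b ℓ))
  have hD0b : ∀ ℓ, |μbar0 ℓ - μ0 ℓ| ≤ Cbar + Cμ := fun ℓ =>
    (abs_sub _ _).trans (add_le_add (hμbar0b ℓ) (hμ0b ℓ))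
  have hD1b' : ∀ ℓ, |μ1 ℓ - μbar1 ℓ| ≤ Cμ + Cbar := fun ℓ =>
    (abs_sub _ _).trans (add_le_add (hμ1b ℓ) (hμbar1b ℓ))
  have hD0b' : ∀ ℓ, |μ0 ℓ - μbar0 ℓ| ≤ Cμ + Cbar := fun ℓ =>
    (abs_sub _ _).trans (add_le_add (hμ0b ℓ) (hμbar0b ℓ))
  have hξδb : ∀ ℓ, |ξbar ℓ - ξ ℓ| ≤ ε⁻¹ + Cξ := fun ℓ =>
    (abs_sub _ _).trans (add_le_add (hξbarb ℓ) (by rw [abs_of_nonneg (hξ0 ℓ)]; exact hξb ℓ))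
  have habs_mul2 : ∀ {a b A' B' : ℝ}, |a| ≤ A' → |b| ≤ B' → |a * b| ≤ A' * B' := by
    intro a b A' B' ha hb
    rw [abs_mul]
    exact mul_le_mul ha hb (abs_nonneg _) ((abs_nonneg a).trans ha)
  -- the nuisance functions h1, h0
  have hh1m : Measurable fun ℓ => (μ1 ℓ - μbar1 ℓ) * (ξbar ℓ / πbar ℓ) :=
    (hμ1.sub hμbar1).mul hq1m
  have hh0m : Measurable fun ℓ => (μ0 ℓ - μbar0 ℓ) * (ξbar ℓ / (1 - πbar ℓ)) :=
    (hμ0.sub hμbar0).mul hq0m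
  have hh1b : ∀ ℓ, |(μ1 ℓ - μbar1 ℓ) * (ξbar ℓ / πbar ℓ)| ≤ (Cμ + Cbar) * (ε⁻¹ * ε⁻¹) :=
    fun ℓ => habs_mul2 (hD1b' ℓ) (hq1b ℓ)
  have hh0b : ∀ ℓ, |(μ0 ℓ - μbar0 ℓ) * (ξbar ℓ / (1 - πbar ℓ))| ≤ (Cμ + Cbar) * (ε⁻¹ * ε⁻¹) :=
    fun ℓ => habs_mul2 (hD0b' ℓ) (hq0b ℓ)
  -- conditional expectation steps
  have hcond : ∀ (h : 𝓛 → ℝ), Measurable h → ∀ (Ch : ℝ), (∀ ℓ, |h ℓ| ≤ Ch) →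
      ∫ ω, A ω * h (Lm ω) ∂(P[|Em]) = ∫ ℓ, π ℓ * h ℓ ∂ρ := by
    intro h hh Ch hhb
    rw [integral_A_mul (P[|Em]) Lm hLm A hA hA1 π hπver h hh Ch hhb, hρ,
      integral_map (f := fun ℓ => π ℓ * h ℓ) hLm.aemeasurable ((hπ.mul hh).aestronglyMeasurable)]
  have hcond' : ∀ (h : 𝓛 → ℝ), Measurable h → ∀ (Ch : ℝ), (∀ ℓ, |h ℓ| ≤ Ch) →
      ∫ ω, (1 - A ω) * h (Lm ω) ∂(P[|Em]) = ∫ ℓ, (1 - π ℓ) * h ℓ ∂ρ := by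
    intro h hh Ch hhb
    have ih : Integrable (fun ω => h (Lm ω)) (P[|Em]) :=
      int_of_bdd ((hh.comp hLm).aestronglyMeasurable) (.of_forall fun ω => hhb (Lm ω))
    have iAh : Integrable (fun ω => A ω * h (Lm ω)) (P[|Em]) :=
      int_of_bdd ((hA.mul (hh.comp hLm)).aestronglyMeasurable) (C := 1 * Ch)
        (.of_forall fun ω => habs_mul2 (hA1 ω) (hhb (Lm ω)))
    have iρh : Integrable h ρ := int_of_bdd hh.aestronglyMeasurable (.of_forall hhb)
    have iρπh : Integrable (fun ℓ => π ℓ * h ℓ) ρ :=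
      int_of_bdd ((hπ.mul hh).aestronglyMeasurable) (C := 1 * Ch)
        (by filter_upwards [hπρ1] with ℓ h1 using habs_mul2 h1 (hhb ℓ))
    have e1 : ∫ ω, (1 - A ω) * h (Lm ω) ∂(P[|Em])
        = ∫ ω, h (Lm ω) ∂(P[|Em]) - ∫ ω, A ω * h (Lm ω) ∂(P[|Em]) := by
      rw [← integral_sub ih iAh]
      exact integral_congr_ae (.of_forall fun ω => by ring)
    have e2 : ∫ ω, h (Lm ω) ∂(P[|Em]) = ∫ ℓ, h ℓ ∂ρ := by
      rw [hρ, integral_map hLm.aemeasurable hh.aestronglyMeasurable]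
    rw [e1, e2, hcond h hh Ch hhb, ← integral_sub iρh iρπh]
    exact integral_congr_ae (.of_forall fun ℓ => by ring)
  -- integrability of the P'-integrands
  have i1 : Integrable (fun ω => A ω * Y ω * (ξbar (Lm ω) / πbar (Lm ω))) (P[|Em]) :=
    int_of_bdd (((hA.mul hY).mul (hq1m.comp hLm)).aestronglyMeasurable)
      (C := 1 * C * (ε⁻¹ * ε⁻¹))
      (.of_forall fun ω => abs_mul3_le (hA1 ω) (hYb ω) (hq1b (Lm ω)))
  have i2 : Integrable (fun ω => A ω * μbar1 (Lm ω) * (ξbar (Lm ω) / πbar (Lm ω))) (P[|Em]) :=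
    int_of_bdd (((hA.mul (hμbar1.comp hLm)).mul (hq1m.comp hLm)).aestronglyMeasurable)
      (C := 1 * Cbar * (ε⁻¹ * ε⁻¹))
      (.of_forall fun ω => abs_mul3_le (hA1 ω) (hμbar1b (Lm ω)) (hq1b (Lm ω)))
  have i3 : Integrable (fun ω => (1 - A ω) * Y ω * (ξbar (Lm ω) / (1 - πbar (Lm ω)))) (P[|Em]) :=
    int_of_bdd ((((measurable_const.sub hA).mul hY).mul (hq0m.comp hLm)).aestronglyMeasurable)
      (C := 1 * C * (ε⁻¹ * ε⁻¹))
      (.of_forall fun ω => abs_mul3_le (h1A1 ω) (hYb ω) (hq0b (Lm ω)))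
  have i4 : Integrable
      (fun ω => (1 - A ω) * μbar0 (Lm ω) * (ξbar (Lm ω) / (1 - πbar (Lm ω)))) (P[|Em]) :=
    int_of_bdd ((((measurable_const.sub hA).mul (hμbar0.comp hLm)).mul
        (hq0m.comp hLm)).aestronglyMeasurable)
      (C := 1 * Cbar * (ε⁻¹ * ε⁻¹))
      (.of_forall fun ω => abs_mul3_le (h1A1 ω) (hμbar0b (Lm ω)) (hq0b (Lm ω)))
  have i1' : Integrable (fun ω => A ω * μ1 (Lm ω) * (ξbar (Lm ω) / πbar (Lm ω))) (P[|Em]) :=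
    int_of_bdd (((hA.mul (hμ1.comp hLm)).mul (hq1m.comp hLm)).aestronglyMeasurable)
      (C := 1 * Cμ * (ε⁻¹ * ε⁻¹))
      (.of_forall fun ω => abs_mul3_le (hA1 ω) (hμ1b (Lm ω)) (hq1b (Lm ω)))
  have i3' : Integrable
      (fun ω => (1 - A ω) * μ0 (Lm ω) * (ξbar (Lm ω) / (1 - πbar (Lm ω)))) (P[|Em]) :=
    int_of_bdd ((((measurable_const.sub hA).mul (hμ0.comp hLm)).mul
        (hq0m.comp hLm)).aestronglyMeasurable)
      (C := 1 * Cμ * (ε⁻¹ * ε⁻¹))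
      (.of_forall fun ω => abs_mul3_le (h1A1 ω) (hμ0b (Lm ω)) (hq0b (Lm ω)))
  -- split the estimating-function integral
  have hTsplit : ∫ ω, ξbar (Lm ω)
          * ((A ω / πbar (Lm ω)) * (Y ω - μbar1 (Lm ω))
            - ((1 - A ω) / (1 - πbar (Lm ω))) * (Y ω - μbar0 (Lm ω))) ∂(P[|Em])
      = ((∫ ω, A ω * Y ω * (ξbar (Lm ω) / πbar (Lm ω)) ∂(P[|Em]))
            - ∫ ω, A ω * μbar1 (Lm ω) * (ξbar (Lm ω) / πbar (Lm ω)) ∂(P[|Em]))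
        - ((∫ ω, (1 - A ω) * Y ω * (ξbar (Lm ω) / (1 - πbar (Lm ω))) ∂(P[|Em]))
            - ∫ ω, (1 - A ω) * μbar0 (Lm ω) * (ξbar (Lm ω) / (1 - πbar (Lm ω))) ∂(P[|Em])) := by
    have eA : ∫ ω, (A ω * Y ω * (ξbar (Lm ω) / πbar (Lm ω))
          - A ω * μbar1 (Lm ω) * (ξbar (Lm ω) / πbar (Lm ω))) ∂(P[|Em])
        = (∫ ω, A ω * Y ω * (ξbar (Lm ω) / πbar (Lm ω)) ∂(P[|Em]))
          - ∫ ω, A ω * μbar1 (Lm ω) * (ξbar (Lm ω) / πbar (Lm ω)) ∂(P[|Em]) :=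
      integral_sub i1 i2
    have eB : ∫ ω, ((1 - A ω) * Y ω * (ξbar (Lm ω) / (1 - πbar (Lm ω)))
          - (1 - A ω) * μbar0 (Lm ω) * (ξbar (Lm ω) / (1 - πbar (Lm ω)))) ∂(P[|Em])
        = (∫ ω, (1 - A ω) * Y ω * (ξbar (Lm ω) / (1 - πbar (Lm ω))) ∂(P[|Em]))
          - ∫ ω, (1 - A ω) * μbar0 (Lm ω) * (ξbar (Lm ω) / (1 - πbar (Lm ω))) ∂(P[|Em]) :=
      integral_sub i3 i4
    have eC : ∫ ω, ((A ω * Y ω * (ξbar (Lm ω) / πbar (Lm ω))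
            - A ω * μbar1 (Lm ω) * (ξbar (Lm ω) / πbar (Lm ω)))
          - ((1 - A ω) * Y ω * (ξbar (Lm ω) / (1 - πbar (Lm ω)))
            - (1 - A ω) * μbar0 (Lm ω) * (ξbar (Lm ω) / (1 - πbar (Lm ω))))) ∂(P[|Em])
        = (∫ ω, (A ω * Y ω * (ξbar (Lm ω) / πbar (Lm ω))
            - A ω * μbar1 (Lm ω) * (ξbar (Lm ω) / πbar (Lm ω))) ∂(P[|Em]))
          - ∫ ω, ((1 - A ω) * Y ω * (ξbar (Lm ω) / (1 - πbar (Lm ω)))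
            - (1 - A ω) * μbar0 (Lm ω) * (ξbar (Lm ω) / (1 - πbar (Lm ω)))) ∂(P[|Em]) :=
      integral_sub (i1.sub i2) (i3.sub i4)
    have eD : ∫ ω, ξbar (Lm ω)
          * ((A ω / πbar (Lm ω)) * (Y ω - μbar1 (Lm ω))
            - ((1 - A ω) / (1 - πbar (Lm ω))) * (Y ω - μbar0 (Lm ω))) ∂(P[|Em])
        = ∫ ω, ((A ω * Y ω * (ξbar (Lm ω) / πbar (Lm ω))
            - A ω * μbar1 (Lm ω) * (ξbar (Lm ω) / πbar (Lm ω)))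
          - ((1 - A ω) * Y ω * (ξbar (Lm ω) / (1 - πbar (Lm ω)))
            - (1 - A ω) * μbar0 (Lm ω) * (ξbar (Lm ω) / (1 - πbar (Lm ω))))) ∂(P[|Em]) := by
      refine integral_congr_ae (.of_forall fun ω => ?_)
      have hb1 : πbar (Lm ω) ≠ 0 := (hπbar_pos (Lm ω)).ne'
      have hb0 : (1:ℝ) - πbar (Lm ω) ≠ 0 := (h1πbar_pos (Lm ω)).ne'
      field_simp
    linarith [eA, eB, eC, eD]
  -- arm 1
  have hT1 : (∫ ω, A ω * Y ω * (ξbar (Lm ω) / πbar (Lm ω)) ∂(P[|Em]))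
        - ∫ ω, A ω * μbar1 (Lm ω) * (ξbar (Lm ω) / πbar (Lm ω)) ∂(P[|Em])
      = ∫ ℓ, π ℓ * ((μ1 ℓ - μbar1 ℓ) * (ξbar ℓ / πbar ℓ)) ∂ρ := by
    rw [hreg1 _ hq1m ⟨_, hq1b⟩]
    have eA : ∫ ω, (A ω * μ1 (Lm ω) * (ξbar (Lm ω) / πbar (Lm ω))
          - A ω * μbar1 (Lm ω) * (ξbar (Lm ω) / πbar (Lm ω))) ∂(P[|Em])
        = (∫ ω, A ω * μ1 (Lm ω) * (ξbar (Lm ω) / πbar (Lm ω)) ∂(P[|Em]))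
          - ∫ ω, A ω * μbar1 (Lm ω) * (ξbar (Lm ω) / πbar (Lm ω)) ∂(P[|Em]) :=
      integral_sub i1' i2
    have eB : ∫ ω, (A ω * μ1 (Lm ω) * (ξbar (Lm ω) / πbar (Lm ω))
          - A ω * μbar1 (Lm ω) * (ξbar (Lm ω) / πbar (Lm ω))) ∂(P[|Em])
        = ∫ ω, A ω * ((μ1 (Lm ω) - μbar1 (Lm ω)) * (ξbar (Lm ω) / πbar (Lm ω))) ∂(P[|Em]) :=
      integral_congr_ae (.of_forall fun ω => by ring)
    have eC := hcond _ hh1m _ hh1b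
    linarith [eA, eB, eC]
  -- arm 0
  have hT0 : (∫ ω, (1 - A ω) * Y ω * (ξbar (Lm ω) / (1 - πbar (Lm ω))) ∂(P[|Em]))
        - ∫ ω, (1 - A ω) * μbar0 (Lm ω) * (ξbar (Lm ω) / (1 - πbar (Lm ω))) ∂(P[|Em])
      = ∫ ℓ, (1 - π ℓ) * ((μ0 ℓ - μbar0 ℓ) * (ξbar ℓ / (1 - πbar ℓ))) ∂ρ := by
    rw [hreg0 _ hq0m ⟨_, hq0b⟩]
    have eA : ∫ ω, ((1 - A ω) * μ0 (Lm ω) * (ξbar (Lm ω) / (1 - πbar (Lm ω)))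
          - (1 - A ω) * μbar0 (Lm ω) * (ξbar (Lm ω) / (1 - πbar (Lm ω)))) ∂(P[|Em])
        = (∫ ω, (1 - A ω) * μ0 (Lm ω) * (ξbar (Lm ω) / (1 - πbar (Lm ω))) ∂(P[|Em]))
          - ∫ ω, (1 - A ω) * μbar0 (Lm ω) * (ξbar (Lm ω) / (1 - πbar (Lm ω))) ∂(P[|Em]) :=
      integral_sub i3' i4
    have eB : ∫ ω, ((1 - A ω) * μ0 (Lm ω) * (ξbar (Lm ω) / (1 - πbar (Lm ω)))
          - (1 - A ω) * μbar0 (Lm ω) * (ξbar (Lm ω) / (1 - πbar (Lm ω)))) ∂(P[|Em])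
        = ∫ ω, (1 - A ω) * ((μ0 (Lm ω) - μbar0 (Lm ω)) * (ξbar (Lm ω) / (1 - πbar (Lm ω)))) ∂(P[|Em]) :=
      integral_congr_ae (.of_forall fun ω => by ring)
    have eC := hcond' _ hh0m _ hh0b
    linarith [eA, eB, eC]
  -- the ν part
  have hνpart : (∫ ℓ, (μbar1 ℓ - μbar0 ℓ) ∂ν) - ∫ ℓ, (μ1 ℓ - μ0 ℓ) ∂ν
      = ∫ ℓ, ξ ℓ * ((μbar1 ℓ - μ1 ℓ) - (μbar0 ℓ - μ0 ℓ)) ∂ρ := by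
    have hν1 : Integrable (fun ℓ => μbar1 ℓ - μbar0 ℓ) ν :=
      int_of_bdd ((hμbar1.sub hμbar0).aestronglyMeasurable) (C := Cbar + Cbar)
        (.of_forall fun ℓ => (abs_sub _ _).trans (add_le_add (hμbar1b ℓ) (hμbar0b ℓ)))
    have hν2 : Integrable (fun ℓ => μ1 ℓ - μ0 ℓ) ν :=
      int_of_bdd ((hμ1.sub hμ0).aestronglyMeasurable) (C := Cμ + Cμ)
        (.of_forall fun ℓ => (abs_sub _ _).trans (add_le_add (hμ1b ℓ) (hμ0b ℓ)))
    have eA : ∫ ℓ, ((μbar1 ℓ - μbar0 ℓ) - (μ1 ℓ - μ0 ℓ)) ∂ν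
        = (∫ ℓ, (μbar1 ℓ - μbar0 ℓ) ∂ν) - ∫ ℓ, (μ1 ℓ - μ0 ℓ) ∂ν := integral_sub hν1 hν2
    have eB : ∫ ℓ, ((μbar1 ℓ - μbar0 ℓ) - (μ1 ℓ - μ0 ℓ)) ∂ν
        = ∫ ℓ, ((μbar1 ℓ - μ1 ℓ) - (μbar0 ℓ - μ0 ℓ)) ∂ν :=
      integral_congr_ae (.of_forall fun ℓ => by ring)
    have eC : ∫ ℓ, ((μbar1 ℓ - μ1 ℓ) - (μbar0 ℓ - μ0 ℓ)) ∂ν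
        = ∫ ℓ, ξ ℓ * ((μbar1 ℓ - μ1 ℓ) - (μbar0 ℓ - μ0 ℓ)) ∂ρ :=
      integral_nu ν ρ ξ hξ hξ0 hξRN _
    linarith [eA, eB, eC]
  -- integrability under ρ
  have iξD : Integrable (fun ℓ => ξ ℓ * ((μbar1 ℓ - μ1 ℓ) - (μbar0 ℓ - μ0 ℓ))) ρ :=
    int_of_bdd ((hξ.mul ((hμbar1.sub hμ1).sub (hμbar0.sub hμ0))).aestronglyMeasurable)
      (C := Cξ * ((Cbar + Cμ) + (Cbar + Cμ)))
      (.of_forall fun ℓ => habs_mul2 (by rw [abs_of_nonneg (hξ0 ℓ)]; exact hξb ℓ)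
        ((abs_sub _ _).trans (add_le_add (hD1b ℓ) (hD0b ℓ))))
  have iπh1 : Integrable (fun ℓ => π ℓ * ((μ1 ℓ - μbar1 ℓ) * (ξbar ℓ / πbar ℓ))) ρ :=
    int_of_bdd ((hπ.mul hh1m).aestronglyMeasurable)
      (C := 1 * ((Cμ + Cbar) * (ε⁻¹ * ε⁻¹)))
      (by filter_upwards [hπρ1] with ℓ h1 using habs_mul2 h1 (hh1b ℓ))
  have iπh0 : Integrable (fun ℓ => (1 - π ℓ) * ((μ0 ℓ - μbar0 ℓ) * (ξbar ℓ / (1 - πbar ℓ)))) ρ :=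
    int_of_bdd (((measurable_const.sub hπ).mul hh0m).aestronglyMeasurable)
      (C := 2 * ((Cμ + Cbar) * (ε⁻¹ * ε⁻¹)))
      (by
        filter_upwards [hπρ1] with ℓ h1
        refine habs_mul2 ?_ (hh0b ℓ)
        calc |1 - π ℓ| ≤ |(1:ℝ)| + |π ℓ| := abs_sub _ _
          _ ≤ 1 + 1 := by rw [abs_one]; exact add_le_add le_rfl h1
          _ = 2 := by norm_num)
  -- combine everything
  have heq : ((∫ ℓ, (μbar1 ℓ - μbar0 ℓ) ∂ν)
        + ∫ ω, ξbar (Lm ω)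
            * ((A ω / πbar (Lm ω)) * (Y ω - μbar1 (Lm ω))
              - ((1 - A ω) / (1 - πbar (Lm ω))) * (Y ω - μbar0 (Lm ω))) ∂(P[|Em]))
      - ∫ ℓ, (μ1 ℓ - μ0 ℓ) ∂ν
      = ∫ ℓ, ((ξ ℓ * ((μbar1 ℓ - μ1 ℓ) - (μbar0 ℓ - μ0 ℓ))
            + π ℓ * ((μ1 ℓ - μbar1 ℓ) * (ξbar ℓ / πbar ℓ)))
          - (1 - π ℓ) * ((μ0 ℓ - μbar0 ℓ) * (ξbar ℓ / (1 - πbar ℓ)))) ∂ρ := by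
    rw [hTsplit, hT1, hT0]
    have hcomb : (∫ ℓ, ξ ℓ * ((μbar1 ℓ - μ1 ℓ) - (μbar0 ℓ - μ0 ℓ)) ∂ρ)
          + (∫ ℓ, π ℓ * ((μ1 ℓ - μbar1 ℓ) * (ξbar ℓ / πbar ℓ)) ∂ρ)
          - ∫ ℓ, (1 - π ℓ) * ((μ0 ℓ - μbar0 ℓ) * (ξbar ℓ / (1 - πbar ℓ))) ∂ρ
        = ∫ ℓ, ((ξ ℓ * ((μbar1 ℓ - μ1 ℓ) - (μbar0 ℓ - μ0 ℓ))
            + π ℓ * ((μ1 ℓ - μbar1 ℓ) * (ξbar ℓ / πbar ℓ)))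
          - (1 - π ℓ) * ((μ0 ℓ - μbar0 ℓ) * (ξbar ℓ / (1 - πbar ℓ)))) ∂ρ := by
      have eA : ∫ ℓ, (ξ ℓ * ((μbar1 ℓ - μ1 ℓ) - (μbar0 ℓ - μ0 ℓ))
            + π ℓ * ((μ1 ℓ - μbar1 ℓ) * (ξbar ℓ / πbar ℓ))) ∂ρ
          = (∫ ℓ, ξ ℓ * ((μbar1 ℓ - μ1 ℓ) - (μbar0 ℓ - μ0 ℓ)) ∂ρ)
            + ∫ ℓ, π ℓ * ((μ1 ℓ - μbar1 ℓ) * (ξbar ℓ / πbar ℓ)) ∂ρ := integral_add iξD iπh1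
      have eB : ∫ ℓ, ((ξ ℓ * ((μbar1 ℓ - μ1 ℓ) - (μbar0 ℓ - μ0 ℓ))
            + π ℓ * ((μ1 ℓ - μbar1 ℓ) * (ξbar ℓ / πbar ℓ)))
          - (1 - π ℓ) * ((μ0 ℓ - μbar0 ℓ) * (ξbar ℓ / (1 - πbar ℓ)))) ∂ρ
          = (∫ ℓ, (ξ ℓ * ((μbar1 ℓ - μ1 ℓ) - (μbar0 ℓ - μ0 ℓ))
            + π ℓ * ((μ1 ℓ - μbar1 ℓ) * (ξbar ℓ / πbar ℓ))) ∂ρ)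
            - ∫ ℓ, (1 - π ℓ) * ((μ0 ℓ - μbar0 ℓ) * (ξbar ℓ / (1 - πbar ℓ))) ∂ρ :=
        integral_sub (iξD.add iπh1) iπh0
      linarith [eA, eB]
    linarith [hνpart, hcomb]
  rw [heq]
  -- pointwise key bounds
  have key1 : ∀ ℓ, |ξ ℓ - π ℓ * (ξbar ℓ / πbar ℓ)|
      ≤ |ξbar ℓ - ξ ℓ| + ε⁻¹ ^ 2 * |πbar ℓ - π ℓ| := fun ℓ => by
    have hb1 : πbar ℓ ≠ 0 := (hπbar_pos ℓ).ne'
    have hid : ξ ℓ - π ℓ * (ξbar ℓ / πbar ℓ)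
        = -(ξbar ℓ - ξ ℓ) + (ξbar ℓ / πbar ℓ) * (πbar ℓ - π ℓ) := by
      field_simp
      ring
    rw [hid]
    calc |(-(ξbar ℓ - ξ ℓ)) + (ξbar ℓ / πbar ℓ) * (πbar ℓ - π ℓ)|
        ≤ |(-(ξbar ℓ - ξ ℓ))| + |(ξbar ℓ / πbar ℓ) * (πbar ℓ - π ℓ)| := abs_add_le _ _
      _ ≤ |ξbar ℓ - ξ ℓ| + ε⁻¹ ^ 2 * |πbar ℓ - π ℓ| := by
          rw [abs_neg, abs_mul]
          refine add_le_add le_rfl (mul_le_mul_of_nonneg_right ?_ (abs_nonneg _))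
          rw [sq]; exact hq1b ℓ
  have key0 : ∀ ℓ, |ξ ℓ - (1 - π ℓ) * (ξbar ℓ / (1 - πbar ℓ))|
      ≤ |ξbar ℓ - ξ ℓ| + ε⁻¹ ^ 2 * |πbar ℓ - π ℓ| := fun ℓ => by
    have hb0 : (1:ℝ) - πbar ℓ ≠ 0 := (h1πbar_pos ℓ).ne'
    have hid : ξ ℓ - (1 - π ℓ) * (ξbar ℓ / (1 - πbar ℓ))
        = -(ξbar ℓ - ξ ℓ) + (ξbar ℓ / (1 - πbar ℓ)) * (π ℓ - πbar ℓ) := by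
      field_simp
      ring
    rw [hid]
    calc |(-(ξbar ℓ - ξ ℓ)) + (ξbar ℓ / (1 - πbar ℓ)) * (π ℓ - πbar ℓ)|
        ≤ |(-(ξbar ℓ - ξ ℓ))| + |(ξbar ℓ / (1 - πbar ℓ)) * (π ℓ - πbar ℓ)| := abs_add_le _ _
      _ ≤ |ξbar ℓ - ξ ℓ| + ε⁻¹ ^ 2 * |πbar ℓ - π ℓ| := by
          rw [abs_neg, abs_mul, abs_sub_comm (π ℓ) (πbar ℓ)]
          refine add_le_add le_rfl (mul_le_mul_of_nonneg_right ?_ (abs_nonneg _))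
          rw [sq]; exact hq0b ℓ
  -- pointwise bound of the integrand by G
  have hFbd : ∀ ℓ, |((ξ ℓ * ((μbar1 ℓ - μ1 ℓ) - (μbar0 ℓ - μ0 ℓ))
            + π ℓ * ((μ1 ℓ - μbar1 ℓ) * (ξbar ℓ / πbar ℓ)))
          - (1 - π ℓ) * ((μ0 ℓ - μbar0 ℓ) * (ξbar ℓ / (1 - πbar ℓ))))|
      ≤ |μbar1 ℓ - μ1 ℓ| * (|ξbar ℓ - ξ ℓ| + ε⁻¹ ^ 2 * |πbar ℓ - π ℓ|)
        + |μbar0 ℓ - μ0 ℓ| * (|ξbar ℓ - ξ ℓ| + ε⁻¹ ^ 2 * |πbar ℓ - π ℓ|) := fun ℓ => by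
    have hid : (ξ ℓ * ((μbar1 ℓ - μ1 ℓ) - (μbar0 ℓ - μ0 ℓ))
            + π ℓ * ((μ1 ℓ - μbar1 ℓ) * (ξbar ℓ / πbar ℓ)))
          - (1 - π ℓ) * ((μ0 ℓ - μbar0 ℓ) * (ξbar ℓ / (1 - πbar ℓ)))
        = (μbar1 ℓ - μ1 ℓ) * (ξ ℓ - π ℓ * (ξbar ℓ / πbar ℓ))
          - (μbar0 ℓ - μ0 ℓ) * (ξ ℓ - (1 - π ℓ) * (ξbar ℓ / (1 - πbar ℓ))) := by ring
    rw [hid]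
    calc |(μbar1 ℓ - μ1 ℓ) * (ξ ℓ - π ℓ * (ξbar ℓ / πbar ℓ))
          - (μbar0 ℓ - μ0 ℓ) * (ξ ℓ - (1 - π ℓ) * (ξbar ℓ / (1 - πbar ℓ)))|
        ≤ |(μbar1 ℓ - μ1 ℓ) * (ξ ℓ - π ℓ * (ξbar ℓ / πbar ℓ))|
          + |(μbar0 ℓ - μ0 ℓ) * (ξ ℓ - (1 - π ℓ) * (ξbar ℓ / (1 - πbar ℓ)))| := abs_sub _ _
      _ ≤ |μbar1 ℓ - μ1 ℓ| * (|ξbar ℓ - ξ ℓ| + ε⁻¹ ^ 2 * |πbar ℓ - π ℓ|)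
          + |μbar0 ℓ - μ0 ℓ| * (|ξbar ℓ - ξ ℓ| + ε⁻¹ ^ 2 * |πbar ℓ - π ℓ|) := by
          rw [abs_mul, abs_mul]
          exact add_le_add (mul_le_mul_of_nonneg_left (key1 ℓ) (abs_nonneg _))
            (mul_le_mul_of_nonneg_left (key0 ℓ) (abs_nonneg _))
  -- integrability of G and its pieces
  have hGm : Measurable fun ℓ => |μbar1 ℓ - μ1 ℓ| * (|ξbar ℓ - ξ ℓ| + ε⁻¹ ^ 2 * |πbar ℓ - π ℓ|)
        + |μbar0 ℓ - μ0 ℓ| * (|ξbar ℓ - ξ ℓ| + ε⁻¹ ^ 2 * |πbar ℓ - π ℓ|) :=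
    ((hμbar1.sub hμ1).abs.mul ((hξbar.sub hξ).abs.add
      (measurable_const.mul (hπbar.sub hπ).abs))).add
      ((hμbar0.sub hμ0).abs.mul ((hξbar.sub hξ).abs.add
        (measurable_const.mul (hπbar.sub hπ).abs)))
  have hGint : Integrable (fun ℓ => |μbar1 ℓ - μ1 ℓ| * (|ξbar ℓ - ξ ℓ| + ε⁻¹ ^ 2 * |πbar ℓ - π ℓ|)
        + |μbar0 ℓ - μ0 ℓ| * (|ξbar ℓ - ξ ℓ| + ε⁻¹ ^ 2 * |πbar ℓ - π ℓ|)) ρ := by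
    refine int_of_bdd hGm.aestronglyMeasurable
      (C := (Cbar + Cμ) * ((ε⁻¹ + Cξ) + ε⁻¹ ^ 2 * 2)
        + (Cbar + Cμ) * ((ε⁻¹ + Cξ) + ε⁻¹ ^ 2 * 2)) ?_
    have hCsum : (0:ℝ) ≤ Cbar + Cμ := add_nonneg hCbar0 hCμ0
    filter_upwards [hπδb] with ℓ hπδ
    have hS : |ξbar ℓ - ξ ℓ| + ε⁻¹ ^ 2 * |πbar ℓ - π ℓ| ≤ (ε⁻¹ + Cξ) + ε⁻¹ ^ 2 * 2 :=
      add_le_add (hξδb ℓ) (mul_le_mul_of_nonneg_left hπδ (sq_nonneg ε⁻¹))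
    have hS0 : (0:ℝ) ≤ |ξbar ℓ - ξ ℓ| + ε⁻¹ ^ 2 * |πbar ℓ - π ℓ| :=
      add_nonneg (abs_nonneg _) (mul_nonneg (sq_nonneg _) (abs_nonneg _))
    have hG0 : (0:ℝ) ≤ |μbar1 ℓ - μ1 ℓ| * (|ξbar ℓ - ξ ℓ| + ε⁻¹ ^ 2 * |πbar ℓ - π ℓ|)
        + |μbar0 ℓ - μ0 ℓ| * (|ξbar ℓ - ξ ℓ| + ε⁻¹ ^ 2 * |πbar ℓ - π ℓ|) :=
      add_nonneg (mul_nonneg (abs_nonneg _) hS0) (mul_nonneg (abs_nonneg _) hS0)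
    rw [abs_of_nonneg hG0]
    exact add_le_add
      (mul_le_mul (hD1b ℓ) hS hS0 hCsum)
      (mul_le_mul (hD0b ℓ) hS hS0 hCsum)
  have hFm : Measurable fun ℓ => ((ξ ℓ * ((μbar1 ℓ - μ1 ℓ) - (μbar0 ℓ - μ0 ℓ))
            + π ℓ * ((μ1 ℓ - μbar1 ℓ) * (ξbar ℓ / πbar ℓ)))
          - (1 - π ℓ) * ((μ0 ℓ - μbar0 ℓ) * (ξbar ℓ / (1 - πbar ℓ)))) :=
    ((hξ.mul ((hμbar1.sub hμ1).sub (hμbar0.sub hμ0))).add (hπ.mul hh1m)).sub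
      ((measurable_const.sub hπ).mul hh0m)
  have hFint : Integrable (fun ℓ => ((ξ ℓ * ((μbar1 ℓ - μ1 ℓ) - (μbar0 ℓ - μ0 ℓ))
            + π ℓ * ((μ1 ℓ - μbar1 ℓ) * (ξbar ℓ / πbar ℓ)))
          - (1 - π ℓ) * ((μ0 ℓ - μbar0 ℓ) * (ξbar ℓ / (1 - πbar ℓ))))) ρ :=
    hGint.mono' hFm.aestronglyMeasurable
      (.of_forall fun ℓ => by rw [Real.norm_eq_abs]; exact hFbd ℓ)
  -- four Cauchy–Schwarz applications
  have ia : Integrable (fun ℓ => |μbar1 ℓ - μ1 ℓ| * |ξbar ℓ - ξ ℓ|) ρ :=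
    int_of_bdd (((hμbar1.sub hμ1).abs.mul (hξbar.sub hξ).abs).aestronglyMeasurable)
      (C := (Cbar + Cμ) * (ε⁻¹ + Cξ))
      (.of_forall fun ℓ => habs_mul2 (by rw [abs_abs]; exact hD1b ℓ)
        (by rw [abs_abs]; exact hξδb ℓ))
  have ib : Integrable (fun ℓ => |μbar1 ℓ - μ1 ℓ| * |πbar ℓ - π ℓ|) ρ :=
    int_of_bdd (((hμbar1.sub hμ1).abs.mul (hπbar.sub hπ).abs).aestronglyMeasurable)
      (C := (Cbar + Cμ) * 2)
      (by
        filter_upwards [hπδb] with ℓ hπδ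
        exact habs_mul2 (by rw [abs_abs]; exact hD1b ℓ) (by rw [abs_abs]; exact hπδ))
  have ic : Integrable (fun ℓ => |μbar0 ℓ - μ0 ℓ| * |ξbar ℓ - ξ ℓ|) ρ :=
    int_of_bdd (((hμbar0.sub hμ0).abs.mul (hξbar.sub hξ).abs).aestronglyMeasurable)
      (C := (Cbar + Cμ) * (ε⁻¹ + Cξ))
      (.of_forall fun ℓ => habs_mul2 (by rw [abs_abs]; exact hD0b ℓ)
        (by rw [abs_abs]; exact hξδb ℓ))
  have id' : Integrable (fun ℓ => |μbar0 ℓ - μ0 ℓ| * |πbar ℓ - π ℓ|) ρ :=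
    int_of_bdd (((hμbar0.sub hμ0).abs.mul (hπbar.sub hπ).abs).aestronglyMeasurable)
      (C := (Cbar + Cμ) * 2)
      (by
        filter_upwards [hπδb] with ℓ hπδ
        exact habs_mul2 (by rw [abs_abs]; exact hD0b ℓ) (by rw [abs_abs]; exact hπδ))
  have cs1 := cs_helper (μ := ρ) ((hμbar1.sub hμ1).aestronglyMeasurable)
    ((hξbar.sub hξ).aestronglyMeasurable) (.of_forall hD1b) (.of_forall hξδb)
  have cs2 := cs_helper (μ := ρ) ((hμbar1.sub hμ1).aestronglyMeasurable)
    ((hπbar.sub hπ).aestronglyMeasurable) (.of_forall hD1b) hπδb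
  have cs3 := cs_helper (μ := ρ) ((hμbar0.sub hμ0).aestronglyMeasurable)
    ((hξbar.sub hξ).aestronglyMeasurable) (.of_forall hD0b) (.of_forall hξδb)
  have cs4 := cs_helper (μ := ρ) ((hμbar0.sub hμ0).aestronglyMeasurable)
    ((hπbar.sub hπ).aestronglyMeasurable) (.of_forall hD0b) hπδb
  -- final chain
  calc |(∫ ℓ, ((ξ ℓ * ((μbar1 ℓ - μ1 ℓ) - (μbar0 ℓ - μ0 ℓ))
            + π ℓ * ((μ1 ℓ - μbar1 ℓ) * (ξbar ℓ / πbar ℓ)))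
          - (1 - π ℓ) * ((μ0 ℓ - μbar0 ℓ) * (ξbar ℓ / (1 - πbar ℓ)))) ∂ρ)|
      ≤ ∫ ℓ, |((ξ ℓ * ((μbar1 ℓ - μ1 ℓ) - (μbar0 ℓ - μ0 ℓ))
            + π ℓ * ((μ1 ℓ - μbar1 ℓ) * (ξbar ℓ / πbar ℓ)))
          - (1 - π ℓ) * ((μ0 ℓ - μbar0 ℓ) * (ξbar ℓ / (1 - πbar ℓ))))| ∂ρ := by
        simpa [Real.norm_eq_abs] using
          norm_integral_le_integral_norm (μ := ρ)
            (fun ℓ => ((ξ ℓ * ((μbar1 ℓ - μ1 ℓ) - (μbar0 ℓ - μ0 ℓ))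
              + π ℓ * ((μ1 ℓ - μbar1 ℓ) * (ξbar ℓ / πbar ℓ)))
              - (1 - π ℓ) * ((μ0 ℓ - μbar0 ℓ) * (ξbar ℓ / (1 - πbar ℓ)))))
    _ ≤ ∫ ℓ, (|μbar1 ℓ - μ1 ℓ| * (|ξbar ℓ - ξ ℓ| + ε⁻¹ ^ 2 * |πbar ℓ - π ℓ|)
          + |μbar0 ℓ - μ0 ℓ| * (|ξbar ℓ - ξ ℓ| + ε⁻¹ ^ 2 * |πbar ℓ - π ℓ|)) ∂ρ :=
        integral_mono_ae hFint.abs hGint (.of_forall fun ℓ => hFbd ℓ)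
    _ = (∫ ℓ, |μbar1 ℓ - μ1 ℓ| * |ξbar ℓ - ξ ℓ| ∂ρ
          + ε⁻¹ ^ 2 * ∫ ℓ, |μbar1 ℓ - μ1 ℓ| * |πbar ℓ - π ℓ| ∂ρ)
        + (∫ ℓ, |μbar0 ℓ - μ0 ℓ| * |ξbar ℓ - ξ ℓ| ∂ρ
          + ε⁻¹ ^ 2 * ∫ ℓ, |μbar0 ℓ - μ0 ℓ| * |πbar ℓ - π ℓ| ∂ρ) := by
        have e1 : ∫ ℓ, (|μbar1 ℓ - μ1 ℓ| * |ξbar ℓ - ξ ℓ|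
              + ε⁻¹ ^ 2 * (|μbar1 ℓ - μ1 ℓ| * |πbar ℓ - π ℓ|)) ∂ρ
            = (∫ ℓ, |μbar1 ℓ - μ1 ℓ| * |ξbar ℓ - ξ ℓ| ∂ρ)
              + ∫ ℓ, ε⁻¹ ^ 2 * (|μbar1 ℓ - μ1 ℓ| * |πbar ℓ - π ℓ|) ∂ρ :=
          integral_add ia (ib.const_mul _)
        have e2 : ∫ ℓ, (|μbar0 ℓ - μ0 ℓ| * |ξbar ℓ - ξ ℓ|
              + ε⁻¹ ^ 2 * (|μbar0 ℓ - μ0 ℓ| * |πbar ℓ - π ℓ|)) ∂ρ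
            = (∫ ℓ, |μbar0 ℓ - μ0 ℓ| * |ξbar ℓ - ξ ℓ| ∂ρ)
              + ∫ ℓ, ε⁻¹ ^ 2 * (|μbar0 ℓ - μ0 ℓ| * |πbar ℓ - π ℓ|) ∂ρ :=
          integral_add ic (id'.const_mul _)
        have e3 : ∫ ℓ, ((|μbar1 ℓ - μ1 ℓ| * |ξbar ℓ - ξ ℓ|
              + ε⁻¹ ^ 2 * (|μbar1 ℓ - μ1 ℓ| * |πbar ℓ - π ℓ|))
            + (|μbar0 ℓ - μ0 ℓ| * |ξbar ℓ - ξ ℓ|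
              + ε⁻¹ ^ 2 * (|μbar0 ℓ - μ0 ℓ| * |πbar ℓ - π ℓ|))) ∂ρ
            = (∫ ℓ, (|μbar1 ℓ - μ1 ℓ| * |ξbar ℓ - ξ ℓ|
              + ε⁻¹ ^ 2 * (|μbar1 ℓ - μ1 ℓ| * |πbar ℓ - π ℓ|)) ∂ρ)
              + ∫ ℓ, (|μbar0 ℓ - μ0 ℓ| * |ξbar ℓ - ξ ℓ|
              + ε⁻¹ ^ 2 * (|μbar0 ℓ - μ0 ℓ| * |πbar ℓ - π ℓ|)) ∂ρ :=
          integral_add (ia.add (ib.const_mul _)) (ic.add (id'.const_mul _))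
        have e4 : ∫ ℓ, ε⁻¹ ^ 2 * (|μbar1 ℓ - μ1 ℓ| * |πbar ℓ - π ℓ|) ∂ρ
            = ε⁻¹ ^ 2 * ∫ ℓ, |μbar1 ℓ - μ1 ℓ| * |πbar ℓ - π ℓ| ∂ρ := integral_const_mul _ _
        have e5 : ∫ ℓ, ε⁻¹ ^ 2 * (|μbar0 ℓ - μ0 ℓ| * |πbar ℓ - π ℓ|) ∂ρ
            = ε⁻¹ ^ 2 * ∫ ℓ, |μbar0 ℓ - μ0 ℓ| * |πbar ℓ - π ℓ| ∂ρ := integral_const_mul _ _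
        have e6 : ∫ ℓ, (|μbar1 ℓ - μ1 ℓ| * (|ξbar ℓ - ξ ℓ| + ε⁻¹ ^ 2 * |πbar ℓ - π ℓ|)
              + |μbar0 ℓ - μ0 ℓ| * (|ξbar ℓ - ξ ℓ| + ε⁻¹ ^ 2 * |πbar ℓ - π ℓ|)) ∂ρ
            = ∫ ℓ, ((|μbar1 ℓ - μ1 ℓ| * |ξbar ℓ - ξ ℓ|
              + ε⁻¹ ^ 2 * (|μbar1 ℓ - μ1 ℓ| * |πbar ℓ - π ℓ|))
            + (|μbar0 ℓ - μ0 ℓ| * |ξbar ℓ - ξ ℓ|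
              + ε⁻¹ ^ 2 * (|μbar0 ℓ - μ0 ℓ| * |πbar ℓ - π ℓ|))) ∂ρ :=
          integral_congr_ae (.of_forall fun ℓ => by ring)
        linarith [e1, e2, e3, e4, e5, e6]
    _ ≤ (Real.sqrt (∫ ℓ, (μbar1 ℓ - μ1 ℓ) ^ 2 ∂ρ) * Real.sqrt (∫ ℓ, (ξbar ℓ - ξ ℓ) ^ 2 ∂ρ)
          + ε⁻¹ ^ 2 * (Real.sqrt (∫ ℓ, (μbar1 ℓ - μ1 ℓ) ^ 2 ∂ρ)
            * Real.sqrt (∫ ℓ, (πbar ℓ - π ℓ) ^ 2 ∂ρ)))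
        + (Real.sqrt (∫ ℓ, (μbar0 ℓ - μ0 ℓ) ^ 2 ∂ρ) * Real.sqrt (∫ ℓ, (ξbar ℓ - ξ ℓ) ^ 2 ∂ρ)
          + ε⁻¹ ^ 2 * (Real.sqrt (∫ ℓ, (μbar0 ℓ - μ0 ℓ) ^ 2 ∂ρ)
            * Real.sqrt (∫ ℓ, (πbar ℓ - π ℓ) ^ 2 ∂ρ))) := by
        exact add_le_add (add_le_add cs1 (mul_le_mul_of_nonneg_left cs2 (sq_nonneg ε⁻¹)))
          (add_le_add cs3 (mul_le_mul_of_nonneg_left cs4 (sq_nonneg ε⁻¹)))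
    _ = (Real.sqrt (∫ ℓ, (μbar1 ℓ - μ1 ℓ) ^ 2 ∂ρ)
          + Real.sqrt (∫ ℓ, (μbar0 ℓ - μ0 ℓ) ^ 2 ∂ρ))
        * (Real.sqrt (∫ ℓ, (ξbar ℓ - ξ ℓ) ^ 2 ∂ρ)
          + ε⁻¹ ^ 2 * Real.sqrt (∫ ℓ, (πbar ℓ - π ℓ) ^ 2 ∂ρ)) := by ring
end
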